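/- Let f ∈ Γ_0(H), and let L : H' → H be a bounded linear operator with L ∘ L* = ν·Id for some ν > 0. Then prox_{f∘L} = Id + ν^{-1} L* ∘ (prox_{νf} − Id) ∘ L. -/

import Mathlib

noncomputable section

/-- The subdifferential of an extended-real-valued function at y. -/
def subdiff {E : Type*} [NormedAddCommGroup E] [InnerProductSpace ℝ E]
    (f : E → EReal) (y : E) : Set E :=
  {u | ∀ z : E, f y + ((inner ℝ u (z - y) : ℝ) : EReal) ≤ f z}

/-- The Moreau objective z ↦ ½‖z − x‖² + f(z). -/
def proxObj {E : Type*} [NormedAddCommGroup E] [InnerProductSpace ℝ E]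
    (f : E → EReal) (x z : E) : EReal :=
  (((1 / 2 : ℝ) * ‖z - x‖ ^ 2 : ℝ) : EReal) + f z

/-- P is the proximal operator of f : for every x, P x is the unique minimizer
of the Moreau objective. -/
def IsProxOf {E : Type*} [NormedAddCommGroup E] [InnerProductSpace ℝ E]
    (f : E → EReal) (P : E → E) : Prop :=
  ∀ x : E, (∀ z : E, proxObj f x (P x) ≤ proxObj f x z) ∧
    (∀ z : E, (∀ w : E, proxObj f x z ≤ proxObj f x w) → z = P x)

/-- f belongs to Γ₀(E): proper, lower semicontinuous and convex,
never taking the value −∞. -/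
def Gamma0 {E : Type*} [NormedAddCommGroup E] [InnerProductSpace ℝ E]
    (f : E → EReal) : Prop :=
  LowerSemicontinuous f ∧ (∃ x, f x ≠ ⊤) ∧ (∀ x, f x ≠ ⊥) ∧
    ∀ (x y : E) (a b : ℝ), 0 ≤ a → 0 ≤ b → a + b = 1 →
      f (a • x + b • y) ≤ (a : EReal) * f x + (b : EReal) * f y

/-!
Put `q = prox_{νf}(L x)` and `z = x + ν⁻¹ L*(q − L x)`. Then `L z = q` and
`ν · ½‖z − x‖² = ½‖q − L x‖²`, while `L L* = ν Id` makes `L / √ν` a contraction, so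
`½‖L w − L x‖² ≤ ν · ½‖w − x‖²` for every `w`. Multiplying the Moreau objective of `f ∘ L` at
`x` by `ν` therefore gives, at `z`, the Moreau objective of `ν f` at `L x` evaluated at its
minimizer `q`, and at any other `w` something at least as large; so `z` minimizes the objective
of `f ∘ L`, and by uniqueness `z = prox_{f∘L}(x)`.
-/

lemma EReal.coe_mul_le_coe_mul_iff {c : ℝ} (hc : 0 < c) {a b : EReal} :
    (c : EReal) * a ≤ c * b ↔ a ≤ b := by
  refine ⟨fun h => ?_, fun h => mul_le_mul_of_nonneg_left h (EReal.coe_nonneg.2 hc.le)⟩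
  have cancel : ∀ d : EReal, (c⁻¹ : ℝ) * ((c : EReal) * d) = d := fun d => by
    rw [← mul_assoc, ← EReal.coe_mul, inv_mul_cancel₀ hc.ne', EReal.coe_one, one_mul]
  simpa only [cancel] using mul_le_mul_of_nonneg_left h (EReal.coe_nonneg.2 (inv_nonneg.2 hc.le))

lemma coe_mul_proxObj {E : Type*} [NormedAddCommGroup E] [InnerProductSpace ℝ E]
    (f : E → EReal) (x z : E) {c : ℝ} (hc : 0 ≤ c) :
    (c : EReal) * proxObj f x z = ((c * ((1 / 2) * ‖z - x‖ ^ 2) : ℝ) : EReal) + c * f z := by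
  rw [proxObj, EReal.left_distrib_of_nonneg_of_ne_top (EReal.coe_nonneg.2 hc)
    (EReal.coe_ne_top c)]
  norm_cast

section CoisometryUpToScale

variable {H H' : Type*}
    [NormedAddCommGroup H] [InnerProductSpace ℝ H] [CompleteSpace H]
    [NormedAddCommGroup H'] [InnerProductSpace ℝ H'] [CompleteSpace H']
    {L : H' →L[ℝ] H} {ν : ℝ}

lemma norm_adjoint_apply_sq_of_apply_adjoint (hLL : ∀ y : H, L (L.adjoint y) = ν • y) (y : H) :
    ‖L.adjoint y‖ ^ 2 = ν * ‖y‖ ^ 2 := by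
  rw [← real_inner_self_eq_norm_sq, ← real_inner_self_eq_norm_sq,
    ContinuousLinearMap.adjoint_inner_left, hLL, real_inner_smul_right]

lemma norm_apply_sq_le_of_apply_adjoint (hν : 0 ≤ ν) (hLL : ∀ y : H, L (L.adjoint y) = ν • y)
    (u : H') : ‖L u‖ ^ 2 ≤ ν * ‖u‖ ^ 2 := by
  have cauchy_schwarz : ‖L u‖ ^ 2 ≤ ‖L.adjoint (L u)‖ * ‖u‖ := by
    rw [← real_inner_self_eq_norm_sq, ← ContinuousLinearMap.adjoint_inner_left]
    exact real_inner_le_norm _ _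
  have squared : ‖L u‖ ^ 2 * ‖L u‖ ^ 2 ≤ ν * ‖u‖ ^ 2 * ‖L u‖ ^ 2 := calc
    ‖L u‖ ^ 2 * ‖L u‖ ^ 2 ≤ (‖L.adjoint (L u)‖ * ‖u‖) ^ 2 := by
      rw [← sq]; gcongr
    _ = ν * ‖u‖ ^ 2 * ‖L u‖ ^ 2 := by
      rw [mul_pow, norm_adjoint_apply_sq_of_apply_adjoint hLL]; ring
  rcases (sq_nonneg ‖L u‖).eq_or_lt with hzero | hpos
  · rw [← hzero]
    positivity
  · exact le_of_mul_le_mul_right squared hpos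

lemma apply_add_inv_smul_adjoint (hν : ν ≠ 0) (hLL : ∀ y : H, L (L.adjoint y) = ν • y)
    (x : H') (q : H) : L (x + ν⁻¹ • L.adjoint (q - L x)) = q := by
  rw [map_add, map_smul, hLL, smul_smul, inv_mul_cancel₀ hν, one_smul, add_sub_cancel]

theorem proxObj_comp_le_of_minimizer (hν : 0 < ν) (hLL : ∀ y : H, L (L.adjoint y) = ν • y)
    {f : H → EReal} {x : H'} {q : H}
    (hq : ∀ v, proxObj (fun w => (ν : EReal) * f w) (L x) q ≤
      proxObj (fun w => (ν : EReal) * f w) (L x) v) (w : H') :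
    proxObj (fun w => f (L w)) x (x + ν⁻¹ • L.adjoint (q - L x)) ≤
      proxObj (fun w => f (L w)) x w := by
  have scaled_dist : ν * ((1 / 2) * ‖x + ν⁻¹ • L.adjoint (q - L x) - x‖ ^ 2) =
      (1 / 2) * ‖q - L x‖ ^ 2 := by
    rw [add_sub_cancel_left, norm_smul, mul_pow, norm_adjoint_apply_sq_of_apply_adjoint hLL,
      norm_inv, Real.norm_of_nonneg hν.le]
    field_simp
  have contraction : ‖L w - L x‖ ^ 2 ≤ ν * ‖w - x‖ ^ 2 := by
    simpa only [map_sub] using norm_apply_sq_le_of_apply_adjoint hν.le hLL (w - x)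
  rw [← EReal.coe_mul_le_coe_mul_iff hν]
  calc (ν : EReal) * proxObj (fun w => f (L w)) x (x + ν⁻¹ • L.adjoint (q - L x))
      = proxObj (fun w => (ν : EReal) * f w) (L x) q := by
        rw [coe_mul_proxObj _ _ _ hν.le, apply_add_inv_smul_adjoint hν.ne' hLL, scaled_dist,
          proxObj]
    _ ≤ proxObj (fun w => (ν : EReal) * f w) (L x) (L w) := hq (L w)
    _ ≤ (ν : EReal) * proxObj (fun w => f (L w)) x w := by
        rw [coe_mul_proxObj _ _ _ hν.le, proxObj]
        gcongr ?_ + _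
        exact EReal.coe_le_coe_iff.2 (by linarith)

end CoisometryUpToScale

theorem prox_comp_linear_general {H H' : Type*}
    [NormedAddCommGroup H] [InnerProductSpace ℝ H] [CompleteSpace H]
    [NormedAddCommGroup H'] [InnerProductSpace ℝ H'] [CompleteSpace H']
    (f : H → EReal) (L : H' →L[ℝ] H) (ν : ℝ) (hν : 0 < ν)
    (hLL : ∀ y : H, L (ContinuousLinearMap.adjoint L y) = ν • y)
    (Pν : H → H) (hPν : IsProxOf (fun w => ((ν : EReal) * f w)) Pν)
    (P : H' → H') (hP : IsProxOf (fun w => f (L w)) P) :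
    ∀ x : H', P x = x + ν⁻¹ • ContinuousLinearMap.adjoint L (Pν (L x) - L x) := by
  intro x
  exact ((hP x).2 _ (proxObj_comp_le_of_minimizer hν hLL (hPν (L x)).1)).symm

/-- if L ∘ L* = ν Id, then prox_{f∘L} = Id + ν⁻¹ L* ∘ (prox_{νf} − Id) ∘ L. -/
theorem prox_comp_linear {H H' : Type*}
    [NormedAddCommGroup H] [InnerProductSpace ℝ H] [CompleteSpace H]
    [NormedAddCommGroup H'] [InnerProductSpace ℝ H'] [CompleteSpace H']
    (f : H → EReal) (hf : Gamma0 f) (L : H' →L[ℝ] H) (ν : ℝ) (hν : 0 < ν)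
    (hLL : ∀ y : H, L (ContinuousLinearMap.adjoint L y) = ν • y)
    (Pν : H → H) (hPν : IsProxOf (fun w => ((ν : EReal) * f w)) Pν)
    (P : H' → H') (hP : IsProxOf (fun w => f (L w)) P) :
    ∀ x : H', P x = x + ν⁻¹ • ContinuousLinearMap.adjoint L (Pν (L x) - L x) :=
  prox_comp_linear_general f L ν hν hLL Pν hPν P hP
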